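/- Let n ≥ 5 and let ρ = |W_n⟩⟨W_n| be the W-state projector. Then the number of Pauli strings with large expectation value is bounded: |{a ∈ (Fin n → Fin 4) : |⟨P_a⟩_ρ| > 3/4}| < 2^(3n/4). -/

import Mathlib

open Matrix Kronecker
open scoped ComplexOrder

noncomputable def pauli1 : Fin 4 → Matrix (Fin 2) (Fin 2) ℂ
  | 0 => !![1, 0; 0, 1]
  | 1 => !![0, 1; 1, 0]
  | 2 => !![0, -Complex.I; Complex.I, 0]
  | 3 => !![1, 0; 0, -1]

noncomputable def PauliOp {n : ℕ} (a : Fin n → Fin 4) :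
    Matrix (Fin n → Fin 2) (Fin n → Fin 2) ℂ :=
  Matrix.of fun z z' => ∏ i, pauli1 (a i) (z i) (z' i)

/-- The trace norm of a matrix: the trace of the positive semidefinite square root of `Aᴴ * A`. -/
noncomputable def traceNorm {m : Type*} [Fintype m] [DecidableEq m]
    (A : Matrix m m ℂ) : ℝ :=
  (((Matrix.posSemidef_conjTranspose_mul_self A).1.eigenvectorUnitary : Matrix m m ℂ) *
    diagonal (((↑) : ℝ → ℂ) ∘ (√·) ∘ (Matrix.posSemidef_conjTranspose_mul_self A).1.eigenvalues) *
    (star (Matrix.posSemidef_conjTranspose_mul_self A).1.eigenvectorUnitary : Matrix m m ℂ)).trace.re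

/-- A quantum state: positive semidefinite with unit trace. -/
structure IsState {m : Type*} [Fintype m] (ρ : Matrix m m ℂ) : Prop where
  posSemidef : ρ.PosSemidef
  trace_one : ρ.trace = 1

/-- Pauli expectation value `⟨P_a⟩_ρ`. -/
noncomputable def pExp {n : ℕ} (ρ : Matrix (Fin n → Fin 2) (Fin n → Fin 2) ℂ)
    (a : Fin n → Fin 4) : ℝ := ((PauliOp a * ρ).trace).re

/-- The purity `tr ρ²`. -/
noncomputable def purity {m : Type*} [Fintype m] (ρ : Matrix m m ℂ) : ℝ :=
  ((ρ * ρ).trace).re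

/-- The Pauli distribution `p_ρ`. -/
noncomputable def pDist {n : ℕ} (ρ : Matrix (Fin n → Fin 2) (Fin n → Fin 2) ℂ)
    (a : Fin n → Fin 4) : ℝ := (pExp ρ a) ^ 2 / (2 ^ n * purity ρ)

/-- The cumulative distribution function `F_ρ`. -/
noncomputable def cdf {n : ℕ} (ρ : Matrix (Fin n → Fin 2) (Fin n → Fin 2) ℂ)
    (ε : ℝ) : ℝ := ∑ a : Fin n → Fin 4, if (pExp ρ a) ^ 2 ≤ ε then pDist ρ a else 0

/-- The maximally entangled state `|Φ₀⟩`. -/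
noncomputable def Phi0 (n : ℕ) : (Fin n → Fin 2) × (Fin n → Fin 2) → ℂ :=
  fun p => if p.1 = p.2 then (↑(Real.sqrt (2 ^ n)))⁻¹ else 0

/-- The Bell state `|Φ_a⟩ = (1 ⊗ P_a)|Φ₀⟩`. -/
noncomputable def BellVec {n : ℕ} (a : Fin n → Fin 4) :
    (Fin n → Fin 2) × (Fin n → Fin 2) → ℂ :=
  ((1 : Matrix (Fin n → Fin 2) (Fin n → Fin 2) ℂ) ⊗ₖ PauliOp a).mulVec (Phi0 n)

/-- The Bell distribution `q_ρ(a) = ⟨Φ_a| ρ ⊗ ρ |Φ_a⟩`. -/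
noncomputable def qDist {n : ℕ} (ρ : Matrix (Fin n → Fin 2) (Fin n → Fin 2) ℂ)
    (a : Fin n → Fin 4) : ℝ :=
  (star (BellVec a) ⬝ᵥ ((ρ ⊗ₖ ρ).mulVec (BellVec a))).re

/-- The W state. -/
noncomputable def Wstate (n : ℕ) : (Fin n → Fin 2) → ℂ :=
  fun z => if (∑ i, (z i : ℕ)) = 1 then (↑(Real.sqrt n))⁻¹ else 0

/-- The W state projector `|W_n⟩⟨W_n|`. -/
noncomputable def Wproj (n : ℕ) : Matrix (Fin n → Fin 2) (Fin n → Fin 2) ℂ :=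
  Matrix.vecMulVec (Wstate n) (star (Wstate n))

/-!
In the W state, `⟨P_a⟩ = (1/n) ∑_{j,k} ⟨e_j| P_a |e_k⟩` over the weight-one strings `e_j`.
`P_a` sends basis strings to basis strings, flipping exactly the bits where `a i ∈ {1, 2}`.
If some bit is flipped, at most two pairs `(j, k)` contribute, so `|⟨P_a⟩| ≤ 2/n < 3/4`;
otherwise `⟨P_a⟩ = (#{a i = 0} - #{a i = 3}) / n`. The diagonal strings with
`|#{a i = 0} - #{a i = 3}| > 3n/4` are counted by a Chernoff bound: weighting a string by
`3 ^ (± (#{a i = 0} - #{a i = 3}))` gives `count * 3 ^ (3n/4) ≤ 2 (10/3)^n < 6 ^ (3n/4)`.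
-/

open Finset

lemma sum_val_eq_one_iff_eq_single {ι : Type*} [Fintype ι] [DecidableEq ι] (z : ι → Fin 2) :
    ∑ i, (z i : ℕ) = 1 ↔ ∃ j, z = Pi.single j 1 := by
  have hval : ∀ i, (z i : ℕ) = if z i = 1 then 1 else 0 := fun i => by split_ifs <;> omega
  simp only [hval, sum_boole, Nat.cast_id, card_eq_one, funext_iff, Pi.single_apply]
  refine exists_congr fun j => ⟨fun h i => ?_, fun h => ?_⟩
  · have := congrArg (i ∈ ·) h
    simp only [mem_filter_univ, mem_singleton] at this
    split_ifs <;> grind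
  · ext i; simp [h]

lemma single_one_injective {ι : Type*} [DecidableEq ι] :
    Function.Injective (fun j : ι => (Pi.single j 1 : ι → Fin 2)) := fun j k h => by
  simpa [Pi.single_apply] using congrFun h j

lemma sum_Wstate_mul {n : ℕ} (f : (Fin n → Fin 2) → ℂ) :
    ∑ z, Wstate n z * f z = (√n : ℂ)⁻¹ * ∑ j, f (Pi.single j 1) := by
  have hsupp : ({z | ∑ i, (z i : ℕ) = 1} : Finset (Fin n → Fin 2)) =
      univ.image (fun j => Pi.single j 1) := by
    ext z
    simp only [mem_filter_univ, mem_image, mem_univ, true_and, sum_val_eq_one_iff_eq_single]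
    exact exists_congr fun _ => eq_comm
  simp only [Wstate, ite_mul, zero_mul, ← sum_filter, hsupp, ← mul_sum,
    sum_image fun j _ k _ h => single_one_injective h]

lemma star_Wstate (n : ℕ) : star (Wstate n) = Wstate n := by
  ext z; simp only [Wstate, Pi.star_apply]; split_ifs <;> simp

lemma pExp_Wproj {n : ℕ} (a : Fin n → Fin 4) :
    pExp (Wproj n) a = (∑ j, ∑ k, PauliOp a (Pi.single j 1) (Pi.single k 1)).re / n := by
  have hnorm : (√n : ℂ)⁻¹ * (√n : ℂ)⁻¹ = ((n : ℝ)⁻¹ : ℝ) := by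
    rw [← mul_inv, ← Complex.ofReal_mul, Real.mul_self_sqrt n.cast_nonneg, Complex.ofReal_inv]
  have htrace : (PauliOp a * Wproj n).trace =
      ∑ z, Wstate n z * ∑ z', Wstate n z' * PauliOp a z z' := by
    rw [Wproj, mul_vecMulVec, trace_vecMulVec, star_Wstate, dotProduct_comm]
    simp [dotProduct, mulVec, mul_comm]
  simp_rw [pExp, htrace, sum_Wstate_mul]
  rw [← mul_sum, ← mul_assoc, hnorm, Complex.re_ofReal_mul, inv_mul_eq_div]

/-- The positions where `P_a` flips the bit, i.e. acts by `σ₁` or `σ₂`. -/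
def xSupport {n : ℕ} (a : Fin n → Fin 4) : Finset (Fin n) := {i | a i = 1 ∨ a i = 2}

lemma xSupport_eq_empty_iff {n : ℕ} {a : Fin n → Fin 4} :
    xSupport a = ∅ ↔ ∀ i, ¬(a i = 1 ∨ a i = 2) := by
  simp [xSupport, filter_eq_empty_iff]

/-- `σ_c = diag(1, zSign c)` for `c ∈ {0, 3}`; the values at `1, 2` are never used. -/
def zSign (c : Fin 4) : ℝ := if c = 3 then -1 else 1

lemma pauli1_ne_zero_iff (c : Fin 4) (x y : Fin 2) :
    pauli1 c x y ≠ 0 ↔ ((c = 1 ∨ c = 2) ↔ x ≠ y) := by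
  fin_cases c <;> fin_cases x <;> fin_cases y <;> simp [pauli1]

lemma norm_pauli1_le_one (c : Fin 4) (x y : Fin 2) : ‖pauli1 c x y‖ ≤ 1 := by
  fin_cases c <;> fin_cases x <;> fin_cases y <;> simp [pauli1]

lemma pauli1_diag {c : Fin 4} (hc : ¬(c = 1 ∨ c = 2)) :
    pauli1 c 0 0 = 1 ∧ pauli1 c 1 1 = zSign c := by
  fin_cases c <;> simp_all [pauli1, zSign]

lemma PauliOp_ne_zero_iff {n : ℕ} (a : Fin n → Fin 4) (z z' : Fin n → Fin 2) :
    PauliOp a z z' ≠ 0 ↔ ∀ i, (i ∈ xSupport a ↔ z i ≠ z' i) := by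
  simp [PauliOp, xSupport, prod_ne_zero_iff, pauli1_ne_zero_iff]

lemma single_one_ne_iff {ι : Type*} [DecidableEq ι] {j k : ι} (hjk : j ≠ k) (i : ι) :
    (Pi.single j 1 : ι → Fin 2) i ≠ (Pi.single k 1 : ι → Fin 2) i ↔ i = j ∨ i = k := by
  by_cases hj : i = j <;> by_cases hk : i = k <;> simp_all

lemma PauliOp_single_ne_zero {n : ℕ} {a : Fin n → Fin 4} (ha : (xSupport a).Nonempty)
    {j k : Fin n} (h : PauliOp a (Pi.single j 1) (Pi.single k 1) ≠ 0) :
    j ≠ k ∧ xSupport a = {j, k} := by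
  rw [PauliOp_ne_zero_iff] at h
  have hjk : j ≠ k := by
    rintro rfl
    obtain ⟨i, hi⟩ := ha
    exact (h i).mp hi rfl
  refine ⟨hjk, ?_⟩
  ext i
  simp [h i, single_one_ne_iff hjk]

lemma PauliOp_single_self {n : ℕ} {a : Fin n → Fin 4} (ha : xSupport a = ∅) (j : Fin n) :
    PauliOp a (Pi.single j 1) (Pi.single j 1) = zSign (a j) := by
  have hdiag := xSupport_eq_empty_iff.mp ha
  rw [PauliOp, of_apply, prod_eq_single j (fun i _ hij => by simp [hij, (pauli1_diag (hdiag i)).1])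
    (by simp)]
  simp [(pauli1_diag (hdiag j)).2]

lemma pExp_Wproj_of_xSupport_eq_empty {n : ℕ} {a : Fin n → Fin 4} (ha : xSupport a = ∅) :
    pExp (Wproj n) a = (∑ j, zSign (a j)) / n := by
  have hoff : ∀ j k, j ≠ k → PauliOp a (Pi.single j 1) (Pi.single k 1) = 0 :=
    fun j k hjk => by
      by_contra h
      simpa [ha] using ((PauliOp_ne_zero_iff a _ _).mp h j).mpr (by simp [hjk])
  rw [pExp_Wproj]
  congr 1
  simp_rw [sum_eq_single_of_mem _ (mem_univ _) (fun k _ hkj => hoff _ k (Ne.symm hkj)),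
    PauliOp_single_self ha, ← Complex.ofReal_sum, Complex.ofReal_re]

lemma norm_PauliOp_apply_le_one {n : ℕ} (a : Fin n → Fin 4) (z z' : Fin n → Fin 2) :
    ‖PauliOp a z z'‖ ≤ 1 := by
  rw [PauliOp, of_apply, norm_prod]
  exact prod_le_one (fun _ _ => norm_nonneg _) fun i _ => norm_pauli1_le_one _ _ _

lemma card_PauliOp_single_ne_zero_le_two {n : ℕ} {a : Fin n → Fin 4}
    (ha : (xSupport a).Nonempty) :
    #{p : Fin n × Fin n | PauliOp a (Pi.single p.1 1) (Pi.single p.2 1) ≠ 0} ≤ 2 := by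
  set S := ({p : Fin n × Fin n | PauliOp a (Pi.single p.1 1) (Pi.single p.2 1) ≠ 0} : Finset _)
  obtain hS | ⟨⟨j, k⟩, hmem⟩ := S.eq_empty_or_nonempty
  · simp [hS]
  obtain ⟨hjk, hsupp⟩ := PauliOp_single_ne_zero ha (mem_filter.mp hmem).2
  have hsub : S ⊆ (xSupport a).offDiag := fun p hp => by
    obtain ⟨hp, hsupp'⟩ := PauliOp_single_ne_zero ha (mem_filter.mp hp).2
    simp [hsupp', hp]
  calc #S ≤ #(xSupport a).offDiag := card_le_card hsub
    _ = 2 := by simp [offDiag_card, hsupp, card_pair hjk]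

lemma abs_pExp_Wproj_le_of_xSupport_nonempty {n : ℕ} {a : Fin n → Fin 4}
    (ha : (xSupport a).Nonempty) : |pExp (Wproj n) a| ≤ 2 / n := by
  set T : Fin n × Fin n → ℂ := fun p => PauliOp a (Pi.single p.1 1) (Pi.single p.2 1)
  have hT : ‖∑ p, T p‖ ≤ 2 := calc
    ‖∑ p, T p‖ = ‖∑ p with T p ≠ 0, T p‖ := by rw [sum_filter_ne_zero]
    _ ≤ ∑ p with T p ≠ 0, ‖T p‖ := norm_sum_le _ _
    _ ≤ #{p | T p ≠ 0} := by
      simpa using sum_le_sum fun p _ => norm_PauliOp_apply_le_one a _ _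
    _ ≤ 2 := by exact_mod_cast card_PauliOp_single_ne_zero_le_two ha
  rw [pExp_Wproj, abs_div, Nat.abs_cast]
  gcongr
  exact (Complex.abs_re_le_norm _).trans (by rwa [← Fintype.sum_prod_type'])

lemma xSupport_eq_empty_and_lt_abs_sum_zSign {n : ℕ} (hn : 5 ≤ n) {a : Fin n → Fin 4}
    (h : 3 / 4 < |pExp (Wproj n) a|) : xSupport a = ∅ ∧ 3 * n / 4 < |∑ j, zSign (a j)| := by
  have hn' : (5 : ℝ) ≤ n := by exact_mod_cast hn
  have ha : xSupport a = ∅ := by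
    by_contra ha
    have := abs_pExp_Wproj_le_of_xSupport_nonempty (nonempty_iff_ne_empty.mpr ha)
    have : (2 : ℝ) / n ≤ 2 / 5 := by gcongr
    linarith
  refine ⟨ha, ?_⟩
  rw [pExp_Wproj_of_xSupport_eq_empty ha, abs_div, Nat.abs_cast, lt_div_iff₀ (by positivity)] at h
  linarith

lemma card_mul_le_sum_pow {β : Type*} [Fintype β] {n : ℕ} {g : β → ℝ} (hg : ∀ b, 0 ≤ g b)
    {S : Finset (Fin n → β)} {c : ℝ} (hS : ∀ a ∈ S, c ≤ ∏ i, g (a i)) :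
    #S * c ≤ (∑ b, g b) ^ n := calc
  #S * c = #S • c := (nsmul_eq_mul _ _).symm
  _ ≤ ∑ a ∈ S, ∏ i, g (a i) := card_nsmul_le_sum _ _ _ hS
  _ ≤ ∑ a : Fin n → β, ∏ i, g (a i) :=
    sum_le_sum_of_subset_of_nonneg (subset_univ _) fun _ _ _ => prod_nonneg fun _ _ => hg _
  _ = (∑ b, g b) ^ n := (Fintype.sum_pow _ _).symm

noncomputable def zWeight (y : ℝ) (c : Fin 4) : ℝ := if c = 1 ∨ c = 2 then 0 else y ^ zSign c

lemma sum_zWeight (y : ℝ) : ∑ c, zWeight y c = y + y⁻¹ := by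
  simp [Fin.sum_univ_four, zWeight, zSign, Real.rpow_neg_one]

lemma prod_zWeight {n : ℕ} {a : Fin n → Fin 4} (ha : xSupport a = ∅) {y : ℝ} (hy : 0 < y) :
    ∏ i, zWeight y (a i) = y ^ ∑ i, zSign (a i) := by
  rw [Real.rpow_sum_of_pos hy]
  exact prod_congr rfl fun i _ => if_neg (xSupport_eq_empty_iff.mp ha i)

lemma card_le_rpow_sum_zSign_mul_le {n : ℕ} {y : ℝ} (hy : 0 < y) (c : ℝ) :
    #{a : Fin n → Fin 4 | xSupport a = ∅ ∧ c ≤ y ^ ∑ i, zSign (a i)} * c ≤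
      (y + y⁻¹) ^ n := by
  rw [← sum_zWeight]
  refine card_mul_le_sum_pow (fun b => ?_) fun a ha => ?_
  · unfold zWeight; split_ifs <;> positivity
  · obtain ⟨ha, hc⟩ := (mem_filter.mp ha).2
    rwa [prod_zWeight ha hy]

lemma card_lt_abs_sum_zSign_mul_rpow_le {n : ℕ} {x : ℝ} (hx : 1 < x) (r : ℝ) :
    #{a : Fin n → Fin 4 | xSupport a = ∅ ∧ r < |∑ i, zSign (a i)|} * x ^ r ≤
      2 * (x + x⁻¹) ^ n := by
  have hx0 : 0 < x := by positivity
  set t : (Fin n → Fin 4) → ℝ := fun a => ∑ i, zSign (a i)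
  set Spos : Finset (Fin n → Fin 4) := {a | xSupport a = ∅ ∧ x ^ r ≤ x ^ t a}
  set Sneg : Finset (Fin n → Fin 4) := {a | xSupport a = ∅ ∧ x ^ r ≤ x⁻¹ ^ t a}
  have hsplit : ({a | xSupport a = ∅ ∧ r < |t a|} : Finset _) ⊆ Spos ∪ Sneg := by
    intro a ha
    simp only [Spos, Sneg, mem_filter_univ, mem_union] at ha ⊢
    rw [Real.inv_rpow hx0.le, ← Real.rpow_neg hx0.le,
      Real.rpow_le_rpow_left_iff hx, Real.rpow_le_rpow_left_iff hx]
    rcases lt_abs.mp ha.2 with h | h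
    · exact Or.inl ⟨ha.1, h.le⟩
    · exact Or.inr ⟨ha.1, h.le⟩
  have hpos : #Spos * x ^ r ≤ (x + x⁻¹) ^ n := card_le_rpow_sum_zSign_mul_le hx0 (x ^ r)
  have hneg : #Sneg * x ^ r ≤ (x⁻¹ + x⁻¹⁻¹) ^ n :=
    card_le_rpow_sum_zSign_mul_le (inv_pos.mpr hx0) (x ^ r)
  rw [inv_inv, add_comm] at hneg
  calc _ ≤ ((#Spos : ℝ) + #Sneg) * x ^ r := by
        gcongr; exact_mod_cast (card_le_card hsplit).trans (card_union_le _ _)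
    _ ≤ 2 * (x + x⁻¹) ^ n := by linarith

lemma two_mul_pow_lt_rpow {n : ℕ} (hn : 5 ≤ n) :
    2 * (3 + 3⁻¹ : ℝ) ^ n < 6 ^ (3 * n / 4 : ℝ) := by
  have h16 : (16 : ℝ) < (6 ^ 3 / (10 / 3) ^ 4) ^ n :=
    (by norm_num : (16 : ℝ) < (6 ^ 3 / (10 / 3) ^ 4) ^ 5).trans_le
      (pow_le_pow_right₀ (by norm_num) hn)
  refine lt_of_pow_lt_pow_left₀ 4 (by positivity) ?_
  rw [← Real.rpow_natCast (6 ^ (3 * n / 4 : ℝ)) 4, ← Real.rpow_mul (by norm_num),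
    show (3 * n / 4 : ℝ) * (4 : ℕ) = (3 * n : ℕ) by push_cast; ring, Real.rpow_natCast]
  rw [div_pow, lt_div_iff₀ (by positivity)] at h16
  calc (2 * (3 + 3⁻¹ : ℝ) ^ n) ^ 4 = 16 * ((10 / 3) ^ 4) ^ n := by
        rw [mul_pow, ← pow_mul, ← pow_mul, mul_comm n 4]; norm_num
    _ < (6 ^ 3) ^ n := h16
    _ = 6 ^ (3 * n) := (pow_mul _ _ _).symm

/-- For `n ≥ 5` and `ρ = |W_n⟩⟨W_n|`,
`|{a : |⟨P_a⟩_ρ| > 3/4}| < 2^(3n/4)`. -/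
theorem stmt_9 {n : ℕ} (hn : 5 ≤ n) :
    (({a : Fin n → Fin 4 | 3 / 4 < |pExp (Wproj n) a|}.ncard : ℝ))
      < (2 : ℝ) ^ ((3 * (n : ℝ)) / 4) := by
  set r : ℝ := 3 * n / 4
  set S : Finset (Fin n → Fin 4) := {a | xSupport a = ∅ ∧ r < |∑ j, zSign (a j)|}
  have hsub : {a : Fin n → Fin 4 | 3 / 4 < |pExp (Wproj n) a|} ⊆ S := fun a ha => by
    simpa [S] using xSupport_eq_empty_and_lt_abs_sum_zSign hn ha
  have hS : #S * (3 : ℝ) ^ r < 2 ^ r * 3 ^ r := calc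
    #S * (3 : ℝ) ^ r ≤ 2 * (3 + 3⁻¹) ^ n := card_lt_abs_sum_zSign_mul_rpow_le (by norm_num) r
    _ < 6 ^ r := two_mul_pow_lt_rpow hn
    _ = 2 ^ r * 3 ^ r := by rw [← Real.mul_rpow (by norm_num) (by norm_num)]; norm_num
  calc _ ≤ (#S : ℝ) := by
        exact_mod_cast (Set.ncard_le_ncard hsub).trans (Set.ncard_coe_finset S).le
    _ < 2 ^ r := lt_of_mul_lt_mul_right hS (by positivity)
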